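/- Let 0 < a ≤ A, let D ⊂ R^N be bounded measurable, and let u : D × [a, A] → [0,∞) be measurable with ∫_a^A u(x,α)dα ≤ M for all x ∈ D. Suppose in addition there exist β, C > 0 and ε > 0 such that u(x,α) ≤ C ε^{−1} exp(−β(α − a)/ε^{2/3}) for all x ∈ D, α ∈ [a,A]. Then, setting v(x) = ∫_a^A α u(x,α) dα, one has sup_{x∈D} |v(x) − a ∫_a^A u(x,α)dα| ≤ √ε·M + (C/β) (A−a) ε^{−1/3} exp(−β δ(ε) ε^{−2/3}) for the choice δ(ε) = √ε, and consequently sup_{x∈D}|v(x) − a·û(x)| → 0 as ε → 0, where û(x) = ∫_a^A u(x,α)dα. -/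

import Mathlib

open Set Real MeasureTheory Filter Topology

/-!
Since `u ≥ 0`, `|v - a û| = ∫ (α - a) u dα`. Split this integral at `α = a + √ε`: on the near
part the weight `α - a` is at most `√ε`, contributing `√ε M`; on the tail the exponential bound
integrates to `(C/β) (A - a) ε^(-1/3) exp(-β ε^(-1/6))`. Both terms vanish as `ε → 0⁺`.
-/

theorem integral_Ioi_exp_neg_mul_sub {c : ℝ} (hc : 0 < c) (a δ : ℝ) :
    ∫ α in Ioi (a + δ), exp (-c * (α - a)) = exp (-c * δ) / c := by
  have hexp : ∀ α : ℝ, exp (-c * (α - a)) = exp (c * a) * exp (-c * α) := fun α => by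
    rw [← exp_add]; ring_nf
  simp_rw [hexp]
  rw [integral_const_mul, integral_exp_mul_Ioi (neg_lt_zero.2 hc), neg_div_neg_eq,
    ← mul_div_assoc, ← exp_add]
  ring_nf

theorem abs_setIntegral_Icc_mul_sub_mul_setIntegral {f : ℝ → ℝ} {a A : ℝ}
    (hf0 : ∀ α ∈ Icc a A, 0 ≤ f α) (hfi : IntegrableOn f (Icc a A)) :
    |(∫ α in Icc a A, α * f α) - a * ∫ α in Icc a A, f α| = ∫ α in Icc a A, (α - a) * f α := by
  have hαf : IntegrableOn (fun α => α * f α) (Icc a A) :=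
    hfi.continuousOn_mul continuousOn_id isCompact_Icc
  rw [← integral_const_mul, ← integral_sub hαf (hfi.const_mul a)]
  simp_rw [← sub_mul]
  refine abs_of_nonneg (setIntegral_nonneg measurableSet_Icc fun α hα => ?_)
  exact mul_nonneg (sub_nonneg.2 hα.1) (hf0 α hα)

theorem setIntegral_Icc_sub_mul_le {f : ℝ → ℝ} {a A c K δ : ℝ} (haA : a ≤ A) (hc : 0 < c)
    (hK : 0 ≤ K) (hδ : 0 ≤ δ) (hf0 : ∀ α ∈ Icc a A, 0 ≤ f α) (hfi : IntegrableOn f (Icc a A))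
    (hdecay : ∀ α ∈ Icc a A, f α ≤ K * exp (-c * (α - a))) :
    ∫ α in Icc a A, (α - a) * f α
      ≤ δ * (∫ α in Icc a A, f α) + (A - a) * K * (exp (-c * δ) / c) := by
  set tail := Ioi (a + δ)
  have hg : IntegrableOn (fun α => (α - a) * f α) (Icc a A) :=
    hfi.continuousOn_mul (continuousOn_id.sub continuousOn_const) isCompact_Icc
  have hexp : IntegrableOn (fun α => (A - a) * K * exp (-c * (α - a))) tail := by
    refine IntegrableOn.congr_fun ((integrableOn_exp_mul_Ioi (neg_lt_zero.2 hc) (a + δ)).const_mul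
      ((A - a) * K * exp (c * a))) (fun α _ => ?_) measurableSet_Ioi
    rw [mul_assoc, ← exp_add]
    ring_nf
  have hnear : ∫ α in Icc a A \ tail, (α - a) * f α ≤ δ * ∫ α in Icc a A, f α := calc
    ∫ α in Icc a A \ tail, (α - a) * f α ≤ ∫ α in Icc a A \ tail, δ * f α := by
      refine setIntegral_mono_on (hg.mono_set sdiff_subset)
        ((hfi.mono_set sdiff_subset).const_mul δ)
        (measurableSet_Icc.diff measurableSet_Ioi) fun α hα => ?_
      have hαδ : α ≤ a + δ := not_lt.1 hα.2
      exact mul_le_mul_of_nonneg_right (by linarith) (hf0 α hα.1)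
    _ = δ * ∫ α in Icc a A \ tail, f α := integral_const_mul _ _
    _ ≤ δ * ∫ α in Icc a A, f α := mul_le_mul_of_nonneg_left
      (setIntegral_mono_set hfi (ae_restrict_of_forall_mem measurableSet_Icc hf0)
        sdiff_subset.eventuallyLE) hδ
  have htail : ∫ α in Icc a A ∩ tail, (α - a) * f α ≤ (A - a) * K * (exp (-c * δ) / c) := calc
    ∫ α in Icc a A ∩ tail, (α - a) * f α
        ≤ ∫ α in Icc a A ∩ tail, (A - a) * K * exp (-c * (α - a)) := by
      refine setIntegral_mono_on (hg.mono_set inter_subset_left) (hexp.mono_set inter_subset_right)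
        (measurableSet_Icc.inter measurableSet_Ioi) fun α ⟨hα, _⟩ => ?_
      rw [mul_assoc]
      exact mul_le_mul (by linarith [hα.2]) (hdecay α hα) (hf0 α hα) (by linarith)
    _ ≤ ∫ α in tail, (A - a) * K * exp (-c * (α - a)) :=
      setIntegral_mono_set hexp
        (ae_restrict_of_forall_mem measurableSet_Ioi fun α _ => by positivity)
        inter_subset_right.eventuallyLE
    _ = (A - a) * K * (exp (-c * δ) / c) := by
      rw [integral_const_mul, integral_Ioi_exp_neg_mul_sub hc]
  rw [← integral_inter_add_sdiff measurableSet_Ioi hg]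
  exact (add_le_add htail hnear).trans_eq (add_comm _ _)

/-- The substitution `t = ε ^ (-1/6)` turns the function into `t ^ 2 * exp (-β t)`. -/
theorem tendsto_rpow_neg_one_third_mul_exp_nhdsGT_zero {β : ℝ} (hβ : 0 < β) :
    Tendsto (fun ε : ℝ => ε ^ (-(1:ℝ)/3) * exp (-β * √ε * ε ^ (-(2:ℝ)/3))) (𝓝[>] 0) (𝓝 0) := by
  refine ((tendsto_rpow_mul_exp_neg_mul_atTop_nhds_zero 2 β hβ).comp
    (tendsto_rpow_neg_nhdsGT_zero (by norm_num : -(1:ℝ)/6 < 0))).congr' ?_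
  filter_upwards [self_mem_nhdsWithin] with ε (hε : 0 < ε)
  rw [Function.comp_apply, ← rpow_mul hε.le, sqrt_eq_rpow, mul_assoc, ← rpow_add hε]
  norm_num

theorem abs_setIntegral_mul_sub_le_of_exp_decay {f : ℝ → ℝ} {a A M β C ε : ℝ} (haA : a ≤ A)
    (hβ : 0 < β) (hC : 0 ≤ C) (hε : 0 < ε) (hf0 : ∀ α ∈ Icc a A, 0 ≤ f α)
    (hfi : IntegrableOn f (Icc a A)) (hmass : ∫ α in Icc a A, f α ≤ M)
    (hdecay : ∀ α ∈ Icc a A, f α ≤ C * ε⁻¹ * exp (-β * (α - a) / ε ^ ((2:ℝ)/3))) :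
    |(∫ α in Icc a A, α * f α) - a * ∫ α in Icc a A, f α|
      ≤ √ε * M + (C / β) * (A - a) * ε ^ (-(1:ℝ)/3) * exp (-β * √ε * ε ^ (-(2:ℝ)/3)) := by
  have hε23 : 0 < ε ^ ((2:ℝ)/3) := rpow_pos_of_pos hε _
  set c := β / ε ^ ((2:ℝ)/3)
  have hdecay' : ∀ α ∈ Icc a A, f α ≤ C * ε⁻¹ * exp (-c * (α - a)) := fun α hα => by
    convert hdecay α hα using 3
    ring
  have htail : (A - a) * (C * ε⁻¹) * (exp (-c * √ε) / c)
      = (C / β) * (A - a) * ε ^ (-(1:ℝ)/3) * exp (-β * √ε * ε ^ (-(2:ℝ)/3)) := by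
    have h13 : ε ^ (-(1:ℝ)/3) = ε⁻¹ * ε ^ ((2:ℝ)/3) := by
      rw [← rpow_neg_one, ← rpow_add hε]; norm_num
    have h23 : ε ^ (-(2:ℝ)/3) = (ε ^ ((2:ℝ)/3))⁻¹ := by
      rw [← rpow_neg hε.le]; norm_num
    rw [h13, h23]
    simp only [c]
    field_simp
  rw [abs_setIntegral_Icc_mul_sub_mul_setIntegral hf0 hfi, ← htail]
  refine (setIntegral_Icc_sub_mul_le haA (by positivity) (by positivity) (sqrt_nonneg ε)
    hf0 hfi hdecay').trans ?_
  gcongr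

theorem stmt_9_general {N : ℕ} (D : Set (EuclideanSpace ℝ (Fin N)))
    (a A : ℝ) (haA : a ≤ A)
    (M β C : ℝ) (hβ : 0 < β) (hC : 0 < C)
    (u : ℝ → EuclideanSpace ℝ (Fin N) → ℝ → ℝ)
    (hu0 : ∀ ε > (0:ℝ), ∀ x ∈ D, ∀ α ∈ Icc a A, 0 ≤ u ε x α)
    (huint : ∀ ε > (0:ℝ), ∀ x ∈ D, IntegrableOn (u ε x) (Icc a A))
    (hmass : ∀ ε > (0:ℝ), ∀ x ∈ D, (∫ α in Icc a A, u ε x α) ≤ M)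
    (hdecay : ∀ ε > (0:ℝ), ∀ x ∈ D, ∀ α ∈ Icc a A,
      u ε x α ≤ C * ε⁻¹ * exp (-β * (α - a) / ε ^ ((2:ℝ)/3))) :
    (∀ ε > (0:ℝ), ∀ x ∈ D,
      |(∫ α in Icc a A, α * u ε x α) - a * ∫ α in Icc a A, u ε x α|
        ≤ Real.sqrt ε * M
          + (C / β) * (A - a) * ε ^ (-(1:ℝ)/3) * exp (-β * Real.sqrt ε * ε ^ (-(2:ℝ)/3))) ∧
    (∀ δ > (0:ℝ), ∃ ε₀ > (0:ℝ), ∀ ε ∈ Ioo (0:ℝ) ε₀, ∀ x ∈ D,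
      |(∫ α in Icc a A, α * u ε x α) - a * ∫ α in Icc a A, u ε x α| < δ) := by
  have bound : ∀ ε > (0:ℝ), ∀ x ∈ D,
      |(∫ α in Icc a A, α * u ε x α) - a * ∫ α in Icc a A, u ε x α|
        ≤ √ε * M + (C / β) * (A - a) * ε ^ (-(1:ℝ)/3) * exp (-β * √ε * ε ^ (-(2:ℝ)/3)) :=
    fun ε hε x hx => abs_setIntegral_mul_sub_le_of_exp_decay haA hβ hC.le hε (hu0 ε hε x hx)
      (huint ε hε x hx) (hmass ε hε x hx) (hdecay ε hε x hx)
  refine ⟨bound, fun δ hδ => ?_⟩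
  have hlim : Tendsto (fun ε : ℝ =>
      √ε * M + (C / β) * (A - a) * ε ^ (-(1:ℝ)/3) * exp (-β * √ε * ε ^ (-(2:ℝ)/3)))
      (𝓝[>] 0) (𝓝 0) := by
    have hsqrt : Tendsto (fun ε : ℝ => √ε) (𝓝[>] 0) (𝓝 0) :=
      (continuous_sqrt.tendsto' 0 0 sqrt_zero).mono_left nhdsWithin_le_nhds
    simpa [mul_assoc] using (hsqrt.mul_const M).add
      ((tendsto_rpow_neg_one_third_mul_exp_nhdsGT_zero hβ).const_mul ((C / β) * (A - a)))
  obtain ⟨ε₀, hε₀, hsmall⟩ := mem_nhdsGT_iff_exists_Ioo_subset.1 (hlim.eventually_lt_const hδ)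
  exact ⟨ε₀, hε₀, fun ε hε x hx => (bound ε hε.1 x hx).trans_lt (hsmall hε)⟩

/-- Lemma 5.4: exponential concentration in the trait variable implies the first moment
`v(x) = ∫ α u(x,α) dα` is uniformly close to `a·û(x)`, with the explicit bound obtained by
splitting the integral at `α = a + √ε`; consequently `sup_D |v - a û| → 0` as `ε → 0`. -/
theorem stmt_9 {N : ℕ} (D : Set (EuclideanSpace ℝ (Fin N)))
    (hDmeas : MeasurableSet D) (hDbdd : Bornology.IsBounded D)
    (a A : ℝ) (ha : 0 < a) (haA : a ≤ A)
    (M β C : ℝ) (hM : 0 < M) (hβ : 0 < β) (hC : 0 < C)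
    (u : ℝ → EuclideanSpace ℝ (Fin N) → ℝ → ℝ)
    (hu0 : ∀ ε > (0:ℝ), ∀ x ∈ D, ∀ α ∈ Icc a A, 0 ≤ u ε x α)
    (huint : ∀ ε > (0:ℝ), ∀ x ∈ D, IntegrableOn (u ε x) (Icc a A))
    (hmass : ∀ ε > (0:ℝ), ∀ x ∈ D, (∫ α in Icc a A, u ε x α) ≤ M)
    (hdecay : ∀ ε > (0:ℝ), ∀ x ∈ D, ∀ α ∈ Icc a A,
      u ε x α ≤ C * ε⁻¹ * exp (-β * (α - a) / ε ^ ((2:ℝ)/3))) :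
    (∀ ε > (0:ℝ), ∀ x ∈ D,
      |(∫ α in Icc a A, α * u ε x α) - a * ∫ α in Icc a A, u ε x α|
        ≤ Real.sqrt ε * M
          + (C / β) * (A - a) * ε ^ (-(1:ℝ)/3) * exp (-β * Real.sqrt ε * ε ^ (-(2:ℝ)/3))) ∧
    (∀ δ > (0:ℝ), ∃ ε₀ > (0:ℝ), ∀ ε ∈ Ioo (0:ℝ) ε₀, ∀ x ∈ D,
      |(∫ α in Icc a A, α * u ε x α) - a * ∫ α in Icc a A, u ε x α| < δ) :=
  stmt_9_general D a A haA M β C hβ hC u hu0 huint hmass hdecay
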